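/- arXiv:math/0110231 — 2 statements merged into one kernel-verified Lean document; each statement's English description precedes it below -/
import Mathlib

section
/- The vector ρ₁ := 3e_L + Σ_{{a,b}⊂{1,…,5}} e_{ab} lies in Γ^∨, spans an extremal ray of Γ^∨, and satisfies ⟨K, ρ₁⟩ = −2; hence ρ₁ is a coextremal ray of M̄_{0,6}. (Geometrically, ρ₁ is the class of the pullback of a conic under the birational morphism from M̄_{0,6} to the Igusa quartic in ℙ⁴ given by the anticanonical series.) -/
noncomputable section

/-- Index in `Fin 16` of the exceptional class `E_{ab}` attached to a pair of points
(points written `0`-based as elements of `Fin 5`, assuming `a < b`):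
`(0,1) ↦ 6, (0,2) ↦ 7, …, (3,4) ↦ 15`. -/
def pairIdx : ℕ → ℕ → Fin 16
  | 0, 1 => 6
  | 0, 2 => 7
  | 0, 3 => 8
  | 0, 4 => 9
  | 1, 2 => 10
  | 1, 3 => 11
  | 1, 4 => 12
  | 2, 3 => 13
  | 2, 4 => 14
  | 3, 4 => 15
  | _, _ => 0

/-- The coordinate vector `e_L` (the class `L`). -/
def eL : Fin 16 → ℝ := Pi.single 0 1

/-- The coordinate vector `e_i` for the point `i ∈ {1,…,5}` (represented `0`-based
by `i : Fin 5`). -/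
def eP (i : Fin 5) : Fin 16 → ℝ := Pi.single ⟨i.val + 1, by omega⟩ 1

/-- The coordinate vector `e_{ab}` for a 2-element subset `{a,b} ⊂ {1,…,5}`
(represented `0`-based); symmetric in `a` and `b`. -/
def eE (a b : Fin 5) : Fin 16 → ℝ :=
  Pi.single (if a.val < b.val then pairIdx a.val b.val else pairIdx b.val a.val) 1

/-- The standard inner product on `ℝ¹⁶`. -/
def ip (x y : Fin 16 → ℝ) : ℝ := ∑ i, x i * y i

def Distinct3 (k l m : Fin 5) : Prop := k ≠ l ∧ k ≠ m ∧ l ≠ m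

def Distinct5 (i j k l m : Fin 5) : Prop :=
  i ≠ j ∧ i ≠ k ∧ i ≠ l ∧ i ≠ m ∧ j ≠ k ∧ j ≠ l ∧ j ≠ m ∧ k ≠ l ∧ k ≠ m ∧ l ≠ m

/-- The 40 classes: 25 boundary divisors and 15 fixed-point divisors `F_σ` of `M̄₀₆`. -/
def Gamma : Set (Fin 16 → ℝ) :=
  {v | (∃ i : Fin 5, v = eP i) ∨
       (∃ a b : Fin 5, a ≠ b ∧ v = eE a b) ∨
       (∃ k l m : Fin 5, Distinct3 k l m ∧
          v = eL - eP k - eP l - eP m - eE k l - eE k m - eE l m) ∨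
       (∃ j a b c d : Fin 5, Distinct5 j a b c d ∧
          v = (2 : ℝ) • eL - (∑ i, eP i) - eE a c - eE a d - eE b c - eE b d)}

/-- The dual cone `Γ^∨ = {v : ⟨g,v⟩ ≥ 0 for all g ∈ Γ}`. -/
def GammaDual : Set (Fin 16 → ℝ) := {v | ∀ gv ∈ Gamma, 0 ≤ ip gv v}
/-- The canonical class `K = -4e_L + 2(e_1 + ⋯ + e_5) + Σ_{{a,b}} e_{ab}` of `M̄₀₆`. -/
def Kcl : Fin 16 → ℝ :=
  -((4 : ℝ) • eL) + (2 : ℝ) • (∑ i, eP i) +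
    ∑ a : Fin 5, ∑ b : Fin 5, if a < b then eE a b else 0

/-- A nonzero `ρ` spans an extremal ray of the convex cone `C` if `ρ ∈ C` and
whenever `v₁, v₂ ∈ C` with `v₁ + v₂ ∈ ℝ₊·ρ`, both `v₁` and `v₂` lie in `ℝ₊·ρ`. -/
def SpansExtremalRay (C : Set (Fin 16 → ℝ)) (ρ : Fin 16 → ℝ) : Prop :=
  ρ ≠ 0 ∧ ρ ∈ C ∧ ∀ v₁ v₂, v₁ ∈ C → v₂ ∈ C →
    (∃ t : ℝ, 0 ≤ t ∧ v₁ + v₂ = t • ρ) →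
    ((∃ t : ℝ, 0 ≤ t ∧ v₁ = t • ρ) ∧ (∃ t : ℝ, 0 ≤ t ∧ v₂ = t • ρ))
/-- `ρ₁ = 3e_L + Σ_{{a,b} ⊂ {1,…,5}} e_{ab}`. -/
def ρ₁ : Fin 16 → ℝ :=
  (3 : ℝ) • eL + ∑ a : Fin 5, ∑ b : Fin 5, if a < b then eE a b else 0


/-! `ρ₁` pairs to `0` with the five `E_i` and the ten planes `L - E_k - E_l - E_m - E_{kl} - E_{km} - E_{lm}`,
to `1` with every `E_{ab}` and to `2` with every `F_σ`, so it lies in `Γ^∨`. The fifteen tight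
classes are linearly independent, so their common orthogonal complement is the line `ℝ ρ₁`.
If `v₁ + v₂ = t ρ₁` inside `Γ^∨`, each `vᵢ` pairs nonnegatively with a tight class whose pairing
with the sum is `0`, hence vanishes on all of them and is a multiple of `ρ₁`; the multiple is
nonnegative because `E_{12}` pairs positively with `ρ₁`. Finally `K · ρ₁ = -12 + 10 = -2`. -/

lemma ip_sub_left (x y v : Fin 16 → ℝ) : ip (x - y) v = ip x v - ip y v := sub_dotProduct x y v

lemma ip_smul_left (c : ℝ) (x v : Fin 16 → ℝ) : ip (c • x) v = c * ip x v := smul_dotProduct c x v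

lemma ip_sum_left {ι : Type*} (s : Finset ι) (x : ι → Fin 16 → ℝ) (v : Fin 16 → ℝ) :
    ip (∑ i ∈ s, x i) v = ∑ i ∈ s, ip (x i) v := sum_dotProduct s x v

lemma ip_single_left (j : Fin 16) (c : ℝ) (v : Fin 16 → ℝ) : ip (Pi.single j c) v = c * v j :=
  single_dotProduct v c j

lemma ip_add_right (x u v : Fin 16 → ℝ) : ip x (u + v) = ip x u + ip x v := dotProduct_add x u v

lemma ip_smul_right (c : ℝ) (x v : Fin 16 → ℝ) : ip x (c • v) = c * ip x v := dotProduct_smul c x v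

def dualCone (S : Set (Fin 16 → ℝ)) : Set (Fin 16 → ℝ) := {v | ∀ g ∈ S, 0 ≤ ip g v}

lemma gammaDual_eq_dualCone : GammaDual = dualCone Gamma := rfl

section DualCone

variable {S : Set (Fin 16 → ℝ)} {ρ : Fin 16 → ℝ}

lemma ip_eq_zero_of_add_eq_smul {v w : Fin 16 → ℝ} (hv : v ∈ dualCone S) (hw : w ∈ dualCone S)
    {t : ℝ} (hvw : v + w = t • ρ) {g : Fin 16 → ℝ} (hg : g ∈ S) (hgρ : ip g ρ = 0) :
    ip g v = 0 := by
  have hsum : ip g v + ip g w = 0 := by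
    rw [← ip_add_right, hvw, ip_smul_right, hgρ, mul_zero]
  linarith [hv g hg, hw g hg]

theorem spansExtremalRay_dualCone (hρ : ρ ∈ dualCone S) {g₀ : Fin 16 → ℝ} (hg₀ : g₀ ∈ S)
    (hg₀ρ : 0 < ip g₀ ρ)
    (hline : ∀ v, (∀ g ∈ S, ip g ρ = 0 → ip g v = 0) → ∃ s : ℝ, v = s • ρ) :
    SpansExtremalRay (dualCone S) ρ := by
  have hray : ∀ v w, v ∈ dualCone S → w ∈ dualCone S → (∃ t : ℝ, 0 ≤ t ∧ v + w = t • ρ) →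
      ∃ s : ℝ, 0 ≤ s ∧ v = s • ρ := by
    rintro v w hv hw ⟨t, -, hvw⟩
    obtain ⟨s, rfl⟩ := hline v fun g hg hgρ => ip_eq_zero_of_add_eq_smul hv hw hvw hg hgρ
    have hs : 0 ≤ s * ip g₀ ρ := ip_smul_right s g₀ ρ ▸ hv g₀ hg₀
    exact ⟨s, nonneg_of_mul_nonneg_left hs hg₀ρ, rfl⟩
  refine ⟨?_, hρ, fun v₁ v₂ hv₁ hv₂ hsum => ⟨hray v₁ v₂ hv₁ hv₂ hsum, hray v₂ v₁ hv₂ hv₁ ?_⟩⟩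
  · rintro rfl
    simp [ip] at hg₀ρ
  · simpa only [add_comm] using hsum

end DualCone

lemma sum_eE_eq : (∑ a : Fin 5, ∑ b : Fin 5, if a < b then eE a b else 0) =
    ![0, 0, 0, 0, 0, 0, 1, 1, 1, 1, 1, 1, 1, 1, 1, 1] := by
  ext j
  fin_cases j <;> simp [Fin.sum_univ_five, eE, pairIdx]

lemma ρ₁_eq : ρ₁ = ![3, 0, 0, 0, 0, 0, 1, 1, 1, 1, 1, 1, 1, 1, 1, 1] := by
  ext j
  fin_cases j <;> simp [ρ₁, sum_eE_eq, eL]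

lemma Kcl_eq : Kcl = ![-4, 2, 2, 2, 2, 2, 1, 1, 1, 1, 1, 1, 1, 1, 1, 1] := by
  ext j
  fin_cases j <;> simp [Kcl, eL, eP, eE, pairIdx, Fin.sum_univ_five]

lemma ip_Kcl_ρ₁ : ip Kcl ρ₁ = -2 := by
  simp [ip, Kcl_eq, ρ₁_eq, Fin.sum_univ_succ]
  norm_num

lemma ip_eL_ρ₁ : ip eL ρ₁ = 3 := by
  simp [eL, ip_single_left, ρ₁_eq]

lemma ip_eP_ρ₁ (i : Fin 5) : ip (eP i) ρ₁ = 0 := by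
  fin_cases i <;> simp [eP, ip_single_left, ρ₁_eq]

lemma ip_eE_ρ₁ {a b : Fin 5} (h : a ≠ b) : ip (eE a b) ρ₁ = 1 := by
  fin_cases a <;> fin_cases b <;> simp_all [eE, pairIdx, ip_single_left, ρ₁_eq]

/-- The strict transform of the plane through the points `p_k, p_l, p_m`. -/
def planeClass (k l m : Fin 5) : Fin 16 → ℝ := eL - eP k - eP l - eP m - eE k l - eE k m - eE l m

lemma ip_planeClass_ρ₁ {k l m : Fin 5} (h : Distinct3 k l m) : ip (planeClass k l m) ρ₁ = 0 := by
  obtain ⟨hkl, hkm, hlm⟩ := h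
  simp only [planeClass, ip_sub_left, ip_eL_ρ₁, ip_eP_ρ₁, ip_eE_ρ₁ hkl, ip_eE_ρ₁ hkm, ip_eE_ρ₁ hlm]
  norm_num

lemma ρ₁_mem_dualCone_gamma : ρ₁ ∈ dualCone Gamma := by
  rintro g (⟨i, rfl⟩ | ⟨a, b, hab, rfl⟩ | ⟨k, l, m, hklm, rfl⟩ | ⟨j, a, b, c, d, hd, rfl⟩)
  · rw [ip_eP_ρ₁]
  · rw [ip_eE_ρ₁ hab]
    exact zero_le_one
  · exact (ip_planeClass_ρ₁ hklm).ge
  · obtain ⟨-, -, -, -, -, hac, had, hbc, hbd, -⟩ := hd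
    simp only [ip_sub_left, ip_smul_left, ip_sum_left, ip_eL_ρ₁, ip_eP_ρ₁, Finset.sum_const_zero,
      ip_eE_ρ₁ hac, ip_eE_ρ₁ had, ip_eE_ρ₁ hbc, ip_eE_ρ₁ hbd]
    norm_num

lemma eq_smul_ρ₁_of_ip_eP_of_ip_planeClass (v : Fin 16 → ℝ) (hP : ∀ i, ip (eP i) v = 0)
    (hH : ∀ k l m, Distinct3 k l m → ip (planeClass k l m) v = 0) : v = v 6 • ρ₁ := by
  have hH' : ∀ k l m : Fin 5, k < l → l < m → ip (planeClass k l m) v = 0 :=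
    fun k l m hkl hlm => hH k l m ⟨hkl.ne, (hkl.trans hlm).ne, hlm.ne⟩
  simp only [eP, ip_single_left, one_mul, Fin.forall_fin_succ, Fin.isValue, Fin.coe_ofNat_eq_mod,
    Nat.zero_mod, zero_add, Fin.mk_one, Fin.val_succ, Nat.reduceAdd, Fin.reduceFinMk,
    Fin.val_eq_zero, forall_const] at hP
  simp only [planeClass, eL, Fin.isValue, eP, eE, Fin.val_fin_lt, pairIdx, ip_sub_left,
    ip_single_left, one_mul, Fin.forall_fin_succ, not_lt_zero, Fin.coe_ofNat_eq_mod, Nat.zero_mod,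
    zero_add, Fin.mk_one, ↓reduceIte, IsEmpty.forall_iff, implies_true, Fin.val_succ,
    Fin.succ_zero_eq_one, Fin.lt_one_iff, Nat.reduceAdd, Fin.reduceFinMk, Fin.val_eq_zero_iff,
    Nat.add_eq_right, Nat.add_eq_zero_iff, one_ne_zero, and_false, Fin.succ_one_eq_two,
    OfNat.ofNat_ne_one, and_self, Nat.reduceEqDiff, Fin.reduceSucc, Nat.succ_ne_self,
    Fin.val_eq_zero, and_true, true_and, forall_const, Fin.reduceLT, Fin.succ_ne_zero,
    lt_self_iff_false, ite_self] at hH'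
  rw [ρ₁_eq]
  ext j
  fin_cases j <;>
    simp only [Fin.zero_eta, Fin.mk_one, Fin.reduceFinMk, Fin.isValue, Pi.smul_apply,
      Matrix.cons_val, Matrix.cons_val_zero, Matrix.cons_val_one, smul_eq_mul, mul_zero,
      mul_one] <;>
    linarith

theorem rho1_coextremal :
    ρ₁ ∈ GammaDual ∧ SpansExtremalRay GammaDual ρ₁ ∧ ip Kcl ρ₁ = -2 := by
  rw [gammaDual_eq_dualCone]
  have hE₀₁ : eE 0 1 ∈ Gamma := Or.inr (Or.inl ⟨0, 1, by decide, rfl⟩)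
  refine ⟨ρ₁_mem_dualCone_gamma, spansExtremalRay_dualCone ρ₁_mem_dualCone_gamma hE₀₁
    (by rw [ip_eE_ρ₁ (by decide)]; exact one_pos) fun v hv => ⟨v 6, ?_⟩, ip_Kcl_ρ₁⟩
  refine eq_smul_ρ₁_of_ip_eP_of_ip_planeClass v (fun i => hv _ (Or.inl ⟨i, rfl⟩) (ip_eP_ρ₁ i)) ?_
  exact fun k l m h => hv _ (Or.inr (Or.inr (Or.inl ⟨k, l, m, h, rfl⟩))) (ip_planeClass_ρ₁ h)
end
end

section
/- Each of the following five vectors lies in Γ^∨, satisfies ⟨K, ρ⟩ = −3, and admits the indicated representation as a nonnegative integer combination of elements of 𝒜 (hence lies in cone(𝒜)): ρ₅ := e_L + e_{45} = A_{23} + B_{146} + B_{156} + B_{236}; ρ₆ := 2e_L + e_{14} + e_{15} + e_{23} + e_{25} + e_{34} = A_{15} + A_{14} + B_{236} + B_{246} + B_{356}; ρ₇ := 2e_L + e_5 + e_{15} + e_{24} + e_{34} = A_{13;5} + A_{15} + B_{236} + B_{246}; ρ₈ := 2e_L + e_5 + e_{14} + e_{23} + e_{34} = A_{12;5} + A_{14}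 + B_{256} + B_{356}; ρ₉ := 2e_L + e_{15} + e_{24} + e_{25} + e_{34} + e_{35} = A_{24} + A_{34} + B_{126} + B_{136} + B_{156}. (These are the anticanonical-degree-3 representatives of the 𝔖₆-orbits of coextremal rays of M̄_{0,6}.) -/
noncomputable section

/-- `B_{ab6} = -e_{ab}` for a pair `{a,b} ⊂ {1,…,5}`. -/
def B6 (a b : Fin 5) : Fin 16 → ℝ := -(eE a b)

/-- `B_{ijk} = e_L + e_a + e_b - e_{ab}` for a 3-element `{i,j,k} ⊂ {1,…,5}`
with complement `{a,b}`. -/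
def Bv (i j k a b : Fin 5) : Fin 16 → ℝ := eL + eP a + eP b - eE a b

/-- `A_{ij} = e_L + e_{ij} + e_{kl} + e_{km} + e_{lm}` for a pair `{i,j} ⊂ {1,…,5}`
with complement `{k,l,m}`. -/
def A2 (i j k l m : Fin 5) : Fin 16 → ℝ := eL + eE i j + eE k l + eE k m + eE l m

/-- `A_{i6} = -2e_i + Σ_{j≠i} e_{ij}`. -/
def A6 (i : Fin 5) : Fin 16 → ℝ :=
  -((2 : ℝ) • eP i) + ∑ j, if j ≠ i then eE i j else 0

/-- `A_{ij;k} = e_L + e_k + e_{ab}` for distinct `i,j,k ∈ {1,…,5}`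
with `{a,b}` the complement of `{i,j,k}`. -/
def A3 (i j k a b : Fin 5) : Fin 16 → ℝ := eL + eP k + eE a b

/-- `A_{ij;6} = 2e_L + e_k + e_l + e_m + e_{ij}` for a pair `{i,j} ⊂ {1,…,5}`
with complement `{k,l,m}`. -/
def A36 (i j k l m : Fin 5) : Fin 16 → ℝ := (2 : ℝ) • eL + eP k + eP l + eP m + eE i j

/-- `A_{i6;k} = -e_i + e_{ik}` for distinct `i,k ∈ {1,…,5}`. -/
def A63 (i k : Fin 5) : Fin 16 → ℝ := -(eP i) + eE i k

/-- The set `𝒜` of 95 vectors: pushforwards of the generators of the nef curve cones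
of the boundary divisors of `M̄₀₆`. -/
def Aset : Set (Fin 16 → ℝ) :=
  {v | (∃ a b, a ≠ b ∧ v = B6 a b) ∨
       (∃ i j k a b, Distinct5 i j k a b ∧ v = Bv i j k a b) ∨
       (∃ i j k l m, Distinct5 i j k l m ∧ v = A2 i j k l m) ∨
       (∃ i, v = A6 i) ∨
       (∃ i j k a b, Distinct5 i j k a b ∧ v = A3 i j k a b) ∨
       (∃ i j k l m, Distinct5 i j k l m ∧ v = A36 i j k l m) ∨
       (∃ i k, i ≠ k ∧ v = A63 i k)}

/-- The convex cone generated by a set: all finite nonnegative combinations. -/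
def coneGen (S : Set (Fin 16 → ℝ)) : Set (Fin 16 → ℝ) :=
  {v | ∃ (n : ℕ) (c : Fin n → ℝ) (x : Fin n → (Fin 16 → ℝ)),
      (∀ t, 0 ≤ c t) ∧ (∀ t, x t ∈ S) ∧ v = ∑ t, c t • x t}
/-- `ρ₅ = e_L + e₄₅`. -/
def ρ₅ : Fin 16 → ℝ := eL + eE 3 4

/-- `ρ₆ = 2e_L + e₁₄ + e₁₅ + e₂₃ + e₂₅ + e₃₄`. -/
def ρ₆ : Fin 16 → ℝ :=
  (2 : ℝ) • eL + eE 0 3 + eE 0 4 + eE 1 2 + eE 1 4 + eE 2 3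

/-- `ρ₇ = 2e_L + e₅ + e₁₅ + e₂₄ + e₃₄`. -/
def ρ₇ : Fin 16 → ℝ := (2 : ℝ) • eL + eP 4 + eE 0 4 + eE 1 3 + eE 2 3

/-- `ρ₈ = 2e_L + e₅ + e₁₄ + e₂₃ + e₃₄`. -/
def ρ₈ : Fin 16 → ℝ := (2 : ℝ) • eL + eP 4 + eE 0 3 + eE 1 2 + eE 2 3

/-- `ρ₉ = 2e_L + e₁₅ + e₂₄ + e₂₅ + e₃₄ + e₃₅`. -/
def ρ₉ : Fin 16 → ℝ :=
  (2 : ℝ) • eL + eE 0 4 + eE 1 3 + eE 1 4 + eE 2 3 + eE 2 4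

namespace Deg3

instance (k l m : Fin 5) : Decidable (Distinct3 k l m) :=
  inferInstanceAs (Decidable (_ ∧ _ ∧ _))
instance (i j k l m : Fin 5) : Decidable (Distinct5 i j k l m) :=
  inferInstanceAs (Decidable (_ ∧ _ ∧ _ ∧ _ ∧ _ ∧ _ ∧ _ ∧ _ ∧ _ ∧ _))

def zL : Fin 16 → ℤ := fun t => if t = 0 then 1 else 0
def zP (i : Fin 5) : Fin 16 → ℤ := fun t => if t = (⟨i.val + 1, by omega⟩ : Fin 16) then 1 else 0
def zE (a b : Fin 5) : Fin 16 → ℤ :=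
  fun t => if t = (if a.val < b.val then pairIdx a.val b.val else pairIdx b.val a.val) then 1 else 0
def zipz (x y : Fin 16 → ℤ) : ℤ := ∑ i, x i * y i
def cv (x : Fin 16 → ℤ) : Fin 16 → ℝ := fun i => (x i : ℝ)

lemma eL_cast : eL = cv zL := by
  funext t; simp [eL, zL, cv, Pi.single_apply, apply_ite]
lemma eP_cast (i : Fin 5) : eP i = cv (zP i) := by
  funext t; simp [eP, zP, cv, Pi.single_apply, apply_ite]
lemma eE_cast (a b : Fin 5) : eE a b = cv (zE a b) := by
  funext t; simp only [eE, zE, cv, Pi.single_apply]; split_ifs <;> simp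

lemma ip_cv (x y : Fin 16 → ℤ) : ip (cv x) (cv y) = (zipz x y : ℝ) := by
  simp only [ip, zipz, cv]; push_cast; rfl

lemma cv_add (x y : Fin 16 → ℤ) : cv x + cv y = cv (fun t => x t + y t) := by
  funext t; simp [cv]

def zSumP : Fin 16 → ℤ := fun t => if 1 ≤ t.val ∧ t.val ≤ 5 then 1 else 0
lemma zSumP_eq : (∑ i, eP i) = cv zSumP := by
  have h : zSumP = ∑ i, zP i := by decide
  rw [h]; funext t
  simp only [Finset.sum_apply, eP_cast, cv]
  push_cast; rfl

def zGIII (k l m : Fin 5) : Fin 16 → ℤ :=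
  fun t => zL t - zP k t - zP l t - zP m t - zE k l t - zE k m t - zE l m t
def zGIV (a b c d : Fin 5) : Fin 16 → ℤ :=
  fun t => 2 * zL t - zSumP t - zE a c t - zE a d t - zE b c t - zE b d t

lemma gIII_cast (k l m : Fin 5) :
    eL - eP k - eP l - eP m - eE k l - eE k m - eE l m = cv (zGIII k l m) := by
  funext t
  simp only [Pi.sub_apply, eL_cast, eP_cast, eE_cast, cv, zGIII]
  push_cast; ring

lemma gIV_cast (a b c d : Fin 5) :
    (2 : ℝ) • eL - (∑ i, eP i) - eE a c - eE a d - eE b c - eE b d = cv (zGIV a b c d) := by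
  funext t
  simp only [Pi.sub_apply, Pi.smul_apply, eL_cast, eE_cast, zSumP_eq, cv, zGIV, smul_eq_mul]
  push_cast; ring

lemma mem_dual_of (z : Fin 16 → ℤ)
    (h1 : ∀ i : Fin 5, 0 ≤ zipz (zP i) z)
    (h2 : ∀ a b : Fin 5, 0 ≤ zipz (zE a b) z)
    (h3 : ∀ k l m : Fin 5, Distinct3 k l m → 0 ≤ zipz (zGIII k l m) z)
    (h4 : ∀ a b c d : Fin 5, (a≠b∧a≠c∧a≠d∧b≠c∧b≠d∧c≠d) → 0 ≤ zipz (zGIV a b c d) z) :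
    cv z ∈ GammaDual := by
  intro gv hgv
  rcases hgv with ⟨i, rfl⟩ | ⟨a, b, hab, rfl⟩ | ⟨k, l, m, h, rfl⟩ | ⟨j, a, b, c, d, h, rfl⟩
  · rw [eP_cast, ip_cv]; exact_mod_cast h1 i
  · rw [eE_cast, ip_cv]; exact_mod_cast h2 a b
  · rw [gIII_cast, ip_cv]; exact_mod_cast h3 k l m h
  · rw [gIV_cast, ip_cv]
    obtain ⟨_, _, _, _, hab, hac, had, hbc, hbd, hcd⟩ := h
    exact_mod_cast h4 a b c d ⟨hab, hac, had, hbc, hbd, hcd⟩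

def zEsum : Fin 16 → ℤ := fun t => if 6 ≤ t.val then 1 else 0
lemma zEsum_cast : (∑ a : Fin 5, ∑ b : Fin 5, if a < b then eE a b else 0) = cv zEsum := by
  have h : zEsum = ∑ a : Fin 5, ∑ b : Fin 5, if a < b then zE a b else 0 := by decide
  have cvz : cv 0 = 0 := by funext t; simp [cv]
  have key : ∀ a b : Fin 5, (if a < b then eE a b else 0) = cv (if a < b then zE a b else 0) := by
    intro a b; by_cases hab : a < b <;> simp [hab, eE_cast, cvz]
  simp only [key]
  rw [h]; funext t
  simp only [Finset.sum_apply, cv]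
  push_cast; rfl

def zK : Fin 16 → ℤ := fun t => if t = 0 then -4 else if t.val ≤ 5 then 2 else 1
lemma Kcl_cast : Kcl = cv zK := by
  have h : zK = fun t => -(4 * zL t) + 2 * zSumP t + zEsum t := by decide
  rw [h]; funext t
  simp only [Kcl, Pi.add_apply, Pi.neg_apply, Pi.smul_apply, eL_cast, zSumP_eq, zEsum_cast, cv,
    smul_eq_mul]
  push_cast; ring

def zB6 (a b : Fin 5) : Fin 16 → ℤ := fun t => -(zE a b t)
lemma B6_cast (a b : Fin 5) : B6 a b = cv (zB6 a b) := by
  funext t; simp only [B6, Pi.neg_apply, eE_cast, cv, zB6]; push_cast; ring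

def zA2 (i j k l m : Fin 5) : Fin 16 → ℤ :=
  fun t => zL t + zE i j t + zE k l t + zE k m t + zE l m t
lemma A2_cast (i j k l m : Fin 5) : A2 i j k l m = cv (zA2 i j k l m) := by
  funext t
  simp only [A2, Pi.add_apply, eL_cast, eE_cast, cv, zA2]; push_cast; ring

def zA3 (i j k a b : Fin 5) : Fin 16 → ℤ := fun t => zL t + zP k t + zE a b t
lemma A3_cast (i j k a b : Fin 5) : A3 i j k a b = cv (zA3 i j k a b) := by
  funext t
  simp only [A3, Pi.add_apply, eL_cast, eP_cast, eE_cast, cv, zA3]; push_cast; ring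

def zρ₅ : Fin 16 → ℤ := fun t => zL t + zE 3 4 t
lemma rho5_cast : ρ₅ = cv zρ₅ := by
  funext t; simp only [ρ₅, Pi.add_apply, eL_cast, eE_cast, cv, zρ₅]; push_cast; ring

def zρ₆ : Fin 16 → ℤ :=
  fun t => 2 * zL t + zE 0 3 t + zE 0 4 t + zE 1 2 t + zE 1 4 t + zE 2 3 t
lemma rho6_cast : ρ₆ = cv zρ₆ := by
  funext t
  simp only [ρ₆, Pi.add_apply, Pi.smul_apply, eL_cast, eE_cast, cv, zρ₆, smul_eq_mul]
  push_cast; ring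

def zρ₇ : Fin 16 → ℤ := fun t => 2 * zL t + zP 4 t + zE 0 4 t + zE 1 3 t + zE 2 3 t
lemma rho7_cast : ρ₇ = cv zρ₇ := by
  funext t
  simp only [ρ₇, Pi.add_apply, Pi.smul_apply, eL_cast, eP_cast, eE_cast, cv, zρ₇, smul_eq_mul]
  push_cast; ring

def zρ₈ : Fin 16 → ℤ := fun t => 2 * zL t + zP 4 t + zE 0 3 t + zE 1 2 t + zE 2 3 t
lemma rho8_cast : ρ₈ = cv zρ₈ := by
  funext t
  simp only [ρ₈, Pi.add_apply, Pi.smul_apply, eL_cast, eP_cast, eE_cast, cv, zρ₈, smul_eq_mul]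
  push_cast; ring

def zρ₉ : Fin 16 → ℤ :=
  fun t => 2 * zL t + zE 0 4 t + zE 1 3 t + zE 1 4 t + zE 2 3 t + zE 2 4 t
lemma rho9_cast : ρ₉ = cv zρ₉ := by
  funext t
  simp only [ρ₉, Pi.add_apply, Pi.smul_apply, eL_cast, eE_cast, cv, zρ₉, smul_eq_mul]
  push_cast; ring

end Deg3

namespace Deg3

lemma dual5 : ρ₅ ∈ GammaDual := by
  rw [rho5_cast]; exact mem_dual_of _ (by decide) (by decide) (by decide) (by decide)
lemma dual6 : ρ₆ ∈ GammaDual := by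
  rw [rho6_cast]; exact mem_dual_of _ (by decide) (by decide) (by decide) (by decide)
lemma dual7 : ρ₇ ∈ GammaDual := by
  rw [rho7_cast]; exact mem_dual_of _ (by decide) (by decide) (by decide) (by decide)
lemma dual8 : ρ₈ ∈ GammaDual := by
  rw [rho8_cast]; exact mem_dual_of _ (by decide) (by decide) (by decide) (by decide)
lemma dual9 : ρ₉ ∈ GammaDual := by
  rw [rho9_cast]; exact mem_dual_of _ (by decide) (by decide) (by decide) (by decide)

lemma deg5 : ip Kcl ρ₅ = -3 := by
  rw [Kcl_cast, rho5_cast, ip_cv, show zipz zK zρ₅ = -3 by decide]; norm_num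
lemma deg6 : ip Kcl ρ₆ = -3 := by
  rw [Kcl_cast, rho6_cast, ip_cv, show zipz zK zρ₆ = -3 by decide]; norm_num
lemma deg7 : ip Kcl ρ₇ = -3 := by
  rw [Kcl_cast, rho7_cast, ip_cv, show zipz zK zρ₇ = -3 by decide]; norm_num
lemma deg8 : ip Kcl ρ₈ = -3 := by
  rw [Kcl_cast, rho8_cast, ip_cv, show zipz zK zρ₈ = -3 by decide]; norm_num
lemma deg9 : ip Kcl ρ₉ = -3 := by
  rw [Kcl_cast, rho9_cast, ip_cv, show zipz zK zρ₉ = -3 by decide]; norm_num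

lemma eq5 : ρ₅ = A2 1 2 0 3 4 + B6 0 3 + B6 0 4 + B6 1 2 := by
  rw [rho5_cast, A2_cast, B6_cast, B6_cast, B6_cast, cv_add, cv_add, cv_add]
  exact congrArg cv (by decide)
lemma eq6 : ρ₆ = A2 0 4 1 2 3 + A2 0 3 1 2 4 + B6 1 2 + B6 1 3 + B6 2 4 := by
  rw [rho6_cast, A2_cast, A2_cast, B6_cast, B6_cast, B6_cast, cv_add, cv_add, cv_add, cv_add]
  exact congrArg cv (by decide)
lemma eq7 : ρ₇ = A3 0 2 4 1 3 + A2 0 4 1 2 3 + B6 1 2 + B6 1 3 := by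
  rw [rho7_cast, A3_cast, A2_cast, B6_cast, B6_cast, cv_add, cv_add, cv_add]
  exact congrArg cv (by decide)
lemma eq8 : ρ₈ = A3 0 1 4 2 3 + A2 0 3 1 2 4 + B6 1 4 + B6 2 4 := by
  rw [rho8_cast, A3_cast, A2_cast, B6_cast, B6_cast, cv_add, cv_add, cv_add]
  exact congrArg cv (by decide)
lemma eq9 : ρ₉ = A2 1 3 0 2 4 + A2 2 3 0 1 4 + B6 0 1 + B6 0 2 + B6 0 4 := by
  rw [rho9_cast, A2_cast, A2_cast, B6_cast, B6_cast, B6_cast, cv_add, cv_add, cv_add, cv_add]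
  exact congrArg cv (by decide)

lemma cone5 : ρ₅ ∈ coneGen Aset := by
  refine ⟨4, fun _ => 1, ![A2 1 2 0 3 4, B6 0 3, B6 0 4, B6 1 2], fun t => zero_le_one, ?_, ?_⟩
  · intro t; fin_cases t
    · exact Or.inr (Or.inr (Or.inl ⟨1, 2, 0, 3, 4, by decide, rfl⟩))
    · exact Or.inl ⟨0, 3, by decide, rfl⟩
    · exact Or.inl ⟨0, 4, by decide, rfl⟩
    · exact Or.inl ⟨1, 2, by decide, rfl⟩
  · simpa [Fin.sum_univ_four] using eq5

lemma cone6 : ρ₆ ∈ coneGen Aset := by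
  refine ⟨5, fun _ => 1, ![A2 0 4 1 2 3, A2 0 3 1 2 4, B6 1 2, B6 1 3, B6 2 4],
    fun t => zero_le_one, ?_, ?_⟩
  · intro t; fin_cases t
    · exact Or.inr (Or.inr (Or.inl ⟨0, 4, 1, 2, 3, by decide, rfl⟩))
    · exact Or.inr (Or.inr (Or.inl ⟨0, 3, 1, 2, 4, by decide, rfl⟩))
    · exact Or.inl ⟨1, 2, by decide, rfl⟩
    · exact Or.inl ⟨1, 3, by decide, rfl⟩
    · exact Or.inl ⟨2, 4, by decide, rfl⟩
  · simpa [Fin.sum_univ_five] using eq6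

lemma cone7 : ρ₇ ∈ coneGen Aset := by
  refine ⟨4, fun _ => 1, ![A3 0 2 4 1 3, A2 0 4 1 2 3, B6 1 2, B6 1 3],
    fun t => zero_le_one, ?_, ?_⟩
  · intro t; fin_cases t
    · exact Or.inr (Or.inr (Or.inr (Or.inr (Or.inl ⟨0, 2, 4, 1, 3, by decide, rfl⟩))))
    · exact Or.inr (Or.inr (Or.inl ⟨0, 4, 1, 2, 3, by decide, rfl⟩))
    · exact Or.inl ⟨1, 2, by decide, rfl⟩
    · exact Or.inl ⟨1, 3, by decide, rfl⟩
  · simpa [Fin.sum_univ_four] using eq7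

lemma cone8 : ρ₈ ∈ coneGen Aset := by
  refine ⟨4, fun _ => 1, ![A3 0 1 4 2 3, A2 0 3 1 2 4, B6 1 4, B6 2 4],
    fun t => zero_le_one, ?_, ?_⟩
  · intro t; fin_cases t
    · exact Or.inr (Or.inr (Or.inr (Or.inr (Or.inl ⟨0, 1, 4, 2, 3, by decide, rfl⟩))))
    · exact Or.inr (Or.inr (Or.inl ⟨0, 3, 1, 2, 4, by decide, rfl⟩))
    · exact Or.inl ⟨1, 4, by decide, rfl⟩
    · exact Or.inl ⟨2, 4, by decide, rfl⟩
  · simpa [Fin.sum_univ_four] using eq8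

lemma cone9 : ρ₉ ∈ coneGen Aset := by
  refine ⟨5, fun _ => 1, ![A2 1 3 0 2 4, A2 2 3 0 1 4, B6 0 1, B6 0 2, B6 0 4],
    fun t => zero_le_one, ?_, ?_⟩
  · intro t; fin_cases t
    · exact Or.inr (Or.inr (Or.inl ⟨1, 3, 0, 2, 4, by decide, rfl⟩))
    · exact Or.inr (Or.inr (Or.inl ⟨2, 3, 0, 1, 4, by decide, rfl⟩))
    · exact Or.inl ⟨0, 1, by decide, rfl⟩
    · exact Or.inl ⟨0, 2, by decide, rfl⟩
    · exact Or.inl ⟨0, 4, by decide, rfl⟩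
  · simpa [Fin.sum_univ_five] using eq9

end Deg3

/-- The degree-3 coextremal representatives lie in `Γ^∨`, have `⟨K,ρ⟩ = -3`, and
decompose as stated in the paper; hence each lies in `cone(𝒜)`. -/
theorem deg3_coextremal_decompositions :
    (ρ₅ ∈ GammaDual ∧ ip Kcl ρ₅ = -3 ∧
      ρ₅ = A2 1 2 0 3 4 + B6 0 3 + B6 0 4 + B6 1 2 ∧
      ρ₅ ∈ coneGen Aset) ∧
    (ρ₆ ∈ GammaDual ∧ ip Kcl ρ₆ = -3 ∧
      ρ₆ = A2 0 4 1 2 3 + A2 0 3 1 2 4 + B6 1 2 + B6 1 3 + B6 2 4 ∧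
      ρ₆ ∈ coneGen Aset) ∧
    (ρ₇ ∈ GammaDual ∧ ip Kcl ρ₇ = -3 ∧
      ρ₇ = A3 0 2 4 1 3 + A2 0 4 1 2 3 + B6 1 2 + B6 1 3 ∧
      ρ₇ ∈ coneGen Aset) ∧
    (ρ₈ ∈ GammaDual ∧ ip Kcl ρ₈ = -3 ∧
      ρ₈ = A3 0 1 4 2 3 + A2 0 3 1 2 4 + B6 1 4 + B6 2 4 ∧
      ρ₈ ∈ coneGen Aset) ∧
    (ρ₉ ∈ GammaDual ∧ ip Kcl ρ₉ = -3 ∧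
      ρ₉ = A2 1 3 0 2 4 + A2 2 3 0 1 4 + B6 0 1 + B6 0 2 + B6 0 4 ∧
      ρ₉ ∈ coneGen Aset) := by
  exact ⟨⟨Deg3.dual5, Deg3.deg5, Deg3.eq5, Deg3.cone5⟩,
    ⟨Deg3.dual6, Deg3.deg6, Deg3.eq6, Deg3.cone6⟩,
    ⟨Deg3.dual7, Deg3.deg7, Deg3.eq7, Deg3.cone7⟩,
    ⟨Deg3.dual8, Deg3.deg8, Deg3.eq8, Deg3.cone8⟩,
    ⟨Deg3.dual9, Deg3.deg9, Deg3.eq9, Deg3.cone9⟩⟩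
end
end
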